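/- Tangency identity for the envelope construction of Riemann entropy solutions: let G(u) = 2u(1−u)(2u−1) and H(u) = 1 − 12(u − 1/2)² (the derivative of G). (i) For every u ∈ [0, 1/2), the point u* := 3/4 − u/2 satisfies u* ∈ (1/2, 3/4] and H(u*)·(u* − u) = G(u*) − G(u), i.e. the tangent line to the graph of G at u* passes through (u, G(u)). (ii) For every w ∈ (1/2, 3/4], the point w_* := 3/2 − 2w satisfies w_* ∈ [0, 1/2) and H(w)·(w − w_*) = G(w) − G(w_*). -/
import Mathlib

/-- The DEP macroscopic flux `G(u) = 2u(1-u)(2u-1)`. -/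
def depG (u : ℝ) : ℝ := 2 * u * (1 - u) * (2 * u - 1)

/-- The characteristic speed `H(u) = G'(u) = 1 - 12(u - 1/2)²`. -/
noncomputable def depH (u : ℝ) : ℝ := 1 - 12 * (u - 1 / 2) ^ 2

/-- Tangency identities for the envelope construction of Riemann entropy solutions:
(i) for `u ∈ [0, 1/2)`, the point `u* = 3/4 - u/2` lies in `(1/2, 3/4]` and the tangent
line to the graph of `G` at `u*` passes through `(u, G(u))`; (ii) for `w ∈ (1/2, 3/4]`,
the point `w_* = 3/2 - 2w` lies in `[0, 1/2)` and `H(w)(w - w_*) = G(w) - G(w_*)`. -/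
theorem depG_envelope_tangency :
    (∀ u ∈ Set.Ico (0 : ℝ) (1 / 2),
      (3 / 4 - u / 2) ∈ Set.Ioc (1 / 2 : ℝ) (3 / 4) ∧
      depH (3 / 4 - u / 2) * ((3 / 4 - u / 2) - u) = depG (3 / 4 - u / 2) - depG u) ∧
    (∀ w ∈ Set.Ioc (1 / 2 : ℝ) (3 / 4),
      (3 / 2 - 2 * w) ∈ Set.Ico (0 : ℝ) (1 / 2) ∧
      depH w * (w - (3 / 2 - 2 * w)) = depG w - depG (3 / 2 - 2 * w)) := by
  constructor
  · rintro u ⟨h0, h1⟩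
    refine ⟨⟨by linarith, by linarith⟩, ?_⟩
    simp only [depG, depH]; ring
  · rintro w ⟨h0, h1⟩
    refine ⟨⟨by linarith, by linarith⟩, ?_⟩
    simp only [depG, depH]; ring
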